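/- Let m and r be positive integers with m ≥ 2, and let Δ: [1, g(m,r)-1] → [1,r] be a coloring. If some color c satisfies |Δ^{-1}(c) ∩ [1, r(m-1)]| ≥ m, then Δ is not an L(r)-coloring, i.e., there exist monochromatic m-sets X ≺ Y in [1, g(m,r)-1] with 2(x_m - x_1) ≤ y_m - x_1. -/

import Mathlib

/-- `x` is a monochromatic m-set (indexed 1..m) inside `S` under coloring `Δ`. -/
def IsMonoMSet (m : ℕ) (Δ : ℕ → ℕ) (S : Finset ℕ) (x : ℕ → ℕ) : Prop :=
  (∀ i j, 1 ≤ i → i < j → j ≤ m → x i < x j) ∧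
  (∀ i, 1 ≤ i → i ≤ m → x i ∈ S) ∧
  (∀ i, 1 ≤ i → i ≤ m → Δ (x i) = Δ (x 1))

/-- There exist monochromatic m-sets X ≺ Y in `S` with 2(x_m - x_1) ≤ y_m - x_1. -/
def HasGoodPair (m : ℕ) (Δ : ℕ → ℕ) (S : Finset ℕ) : Prop :=
  ∃ x y : ℕ → ℕ, IsMonoMSet m Δ S x ∧ IsMonoMSet m Δ S y ∧
    x m < y 1 ∧ 2 * (x m - x 1) ≤ y m - x 1

/-- `g m r` : least N such that every r-coloring of [1,N] has a good pair. -/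
noncomputable def g (m r : ℕ) : ℕ :=
  sInf {N | ∀ Δ : ℕ → ℕ, (∀ z ∈ Finset.Icc 1 N, Δ z ∈ Finset.Icc 1 r) →
    HasGoodPair m Δ (Finset.Icc 1 N)}

/-!
Set `R = r(m - 1)`. Some color `e` is late: every initial segment `[1, w]` holding `m - 1` points
of color `e` has `w ≥ R`, since otherwise the longest of these short segments would hold `m - 1`
points of each of the `r` colors. Give a new first point the color `e` and shift `Δ` one step to
the right; this colors `[1, g(m, r)]`, which therefore has a good pair `X ≺ Y`. If `X` avoids the
new point, shifting back gives a good pair for `Δ`. Otherwise the other `m - 1` points of `X`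
witness `x_m - 1 ≥ R`, so `y_m - 1 ≥ 2(x_m - 1) ≥ 2R`, and the `m` points of color `c` in
`[1, R]` together with `Y` shifted back form a good pair for `Δ`.
-/

open Finset

def ForcesGoodPair (m r N : ℕ) : Prop :=
  ∀ Δ : ℕ → ℕ, (∀ z ∈ Icc 1 N, Δ z ∈ Icc 1 r) → HasGoodPair m Δ (Icc 1 N)

namespace IsMonoMSet

variable {m : ℕ} {Δ : ℕ → ℕ} {S : Finset ℕ} {x : ℕ → ℕ}

lemma mem (hx : IsMonoMSet m Δ S x) {i : ℕ} (hi : 1 ≤ i) (him : i ≤ m) : x i ∈ S :=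
  hx.2.1 i hi him

lemma lt (hx : IsMonoMSet m Δ S x) {i j : ℕ} (hi : 1 ≤ i) (hij : i < j) (hjm : j ≤ m) :
    x i < x j :=
  hx.1 i j hi hij hjm

lemma le (hx : IsMonoMSet m Δ S x) {i j : ℕ} (hi : 1 ≤ i) (hij : i ≤ j) (hjm : j ≤ m) :
    x i ≤ x j := by
  rcases hij.eq_or_lt with rfl | hij
  · exact le_rfl
  · exact (hx.lt hi hij hjm).le

lemma color_eq (hx : IsMonoMSet m Δ S x) {i : ℕ} (hi : 1 ≤ i) (him : i ≤ m) :
    Δ (x i) = Δ (x 1) :=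
  hx.2.2 i hi him

lemma mono {T : Finset ℕ} (hx : IsMonoMSet m Δ S x) (hST : S ⊆ T) : IsMonoMSet m Δ T x :=
  ⟨hx.1, fun _ hi him => hST (hx.mem hi him), hx.2.2⟩

end IsMonoMSet

lemma exists_isMonoMSet_of_le_card_filter {m d : ℕ} {Δ : ℕ → ℕ} {s : Finset ℕ}
    (h : m ≤ #{z ∈ s | Δ z = d}) : ∃ x, IsMonoMSet m Δ s x := by
  cases m with
  | zero => exact ⟨id, fun _ _ _ _ _ => by omega, fun _ _ _ => by omega, fun _ _ _ => by omega⟩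
  | succ k =>
    let enum := Finset.orderEmbOfCardLe {z ∈ s | Δ z = d} h
    have hmem : ∀ i, enum i ∈ s ∧ Δ (enum i) = d := fun i =>
      mem_filter.1 (orderEmbOfCardLe_mem _ h i)
    refine ⟨fun i => enum (Fin.clamp (i - 1) k), fun i j hi hij hjm => ?_,
      fun i _ _ => (hmem _).1, fun i _ _ => by rw [(hmem _).2, (hmem _).2]⟩
    refine enum.strictMono (Fin.lt_def.2 ?_)
    rw [Fin.coe_clamp, Fin.coe_clamp]
    omega

lemma exists_isMonoMSet_of_mul_lt_card {m : ℕ} {Δ : ℕ → ℕ} {s t : Finset ℕ}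
    (hΔ : ∀ z ∈ s, Δ z ∈ t) (h : #t * (m - 1) < #s) : ∃ x, IsMonoMSet m Δ s x := by
  obtain ⟨d, -, hd⟩ := exists_lt_card_fiber_of_mul_lt_card_of_maps_to hΔ h
  exact exists_isMonoMSet_of_le_card_filter (d := d) (by omega)

lemma forcesGoodPair_three_mul_add_two {m : ℕ} (r : ℕ) (hm : 2 ≤ m) :
    ForcesGoodPair m r (3 * (r * (m - 1)) + 2) := by
  intro Δ hΔ
  set R := r * (m - 1) with hR
  have hcolors : ∀ a b, 1 ≤ a → b ≤ 3 * R + 2 → ∀ z ∈ Icc a b, Δ z ∈ Icc 1 r :=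
    fun a b ha hb z hz => hΔ z (Icc_subset_Icc ha hb hz)
  obtain ⟨x, hx⟩ := exists_isMonoMSet_of_mul_lt_card (m := m)
    (hcolors 1 (R + 1) le_rfl (by omega)) (by simp [R])
  have hx1 := mem_Icc.1 (hx.mem le_rfl (by omega : 1 ≤ m))
  have hxm := mem_Icc.1 (hx.mem (by omega) le_rfl)
  have hx1m := hx.lt le_rfl (by omega : 1 < m) le_rfl
  -- every `Y` lying beyond `2 x_m - x_1` completes `X` to a good pair
  obtain ⟨y, hy⟩ := exists_isMonoMSet_of_mul_lt_card (m := m)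
    (hcolors (2 * x m - x 1) (2 * x m - x 1 + R) (by omega) (by omega))
    (by rw [Nat.card_Icc, Nat.card_Icc, Nat.add_sub_cancel, ← hR]; omega)
  have hy1 := mem_Icc.1 (hy.mem le_rfl (by omega : 1 ≤ m))
  have hym := mem_Icc.1 (hy.mem (by omega) le_rfl)
  exact ⟨x, y, hx.mono (Icc_subset_Icc le_rfl (by omega)),
    hy.mono (Icc_subset_Icc (by omega) (by omega)), by omega, by omega⟩

lemma not_forcesGoodPair_zero {m : ℕ} (r : ℕ) (hm : 1 ≤ m) : ¬ ForcesGoodPair m r 0 := by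
  intro h
  obtain ⟨x, -, hx, -⟩ := h (fun _ => 1) (by simp)
  simpa using hx.mem le_rfl hm

lemma forcesGoodPair_g {m : ℕ} (r : ℕ) (hm : 2 ≤ m) : ForcesGoodPair m r (g m r) :=
  Nat.sInf_mem (s := {N | ForcesGoodPair m r N}) ⟨_, forcesGoodPair_three_mul_add_two r hm⟩

lemma g_pos {m : ℕ} (r : ℕ) (hm : 2 ≤ m) : 0 < g m r :=
  Nat.pos_of_ne_zero fun h => not_forcesGoodPair_zero r (by omega) (h ▸ forcesGoodPair_g r hm)

lemma exists_color_mul_le_of_le_card_filter {r : ℕ} (hr : 1 ≤ r) (k : ℕ) (Δ : ℕ → ℕ) :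
    ∃ e ∈ Icc 1 r, ∀ w, k ≤ #{z ∈ Icc 1 w | Δ z = e} → r * k ≤ w := by
  by_contra! h
  choose! w hwk hwlt using h
  have hW : (Icc 1 r).sup w < r * k :=
    (Finset.sup_lt_iff (bot_le.trans_lt (hwlt 1 (by simp [hr])))).2 hwlt
  obtain ⟨e, he, hfew⟩ := exists_card_fiber_lt_of_card_lt_mul (s := Icc 1 ((Icc 1 r).sup w))
    (t := Icc 1 r) (f := Δ) (by simpa using hW)
  have hmono : #{z ∈ Icc 1 (w e) | Δ z = e} ≤ #{z ∈ Icc 1 ((Icc 1 r).sup w) | Δ z = e} :=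
    card_le_card (filter_subset_filter _ (Icc_subset_Icc_right (le_sup he)))
  have := hwk e he
  omega

def prependColor (e : ℕ) (Δ : ℕ → ℕ) (z : ℕ) : ℕ := if z = 1 then e else Δ (z - 1)

section prependColor

variable {e : ℕ} {Δ : ℕ → ℕ}

lemma prependColor_one : prependColor e Δ 1 = e := if_pos rfl

lemma prependColor_of_ne_one {z : ℕ} (hz : z ≠ 1) : prependColor e Δ z = Δ (z - 1) :=
  if_neg hz

lemma prependColor_mem_Icc {n r : ℕ} (he : e ∈ Icc 1 r) (hΔ : ∀ z ∈ Icc 1 n, Δ z ∈ Icc 1 r) :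
    ∀ z ∈ Icc 1 (n + 1), prependColor e Δ z ∈ Icc 1 r := by
  intro z hz
  rcases eq_or_ne z 1 with rfl | hz1
  · rwa [prependColor_one]
  · rw [prependColor_of_ne_one hz1]
    exact hΔ _ (by simp only [mem_Icc] at hz ⊢; omega)

variable {m : ℕ} {x : ℕ → ℕ}

lemma IsMonoMSet.sub_one {n : ℕ} (hx : IsMonoMSet m (prependColor e Δ) (Icc 1 (n + 1)) x)
    (h2 : 2 ≤ x 1) : IsMonoMSet m Δ (Icc 1 n) (fun i => x i - 1) := by
  have hge : ∀ {i}, 1 ≤ i → i ≤ m → 2 ≤ x i := fun hi him => h2.trans (hx.le le_rfl hi him)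
  refine ⟨fun i j hi hij hjm => ?_, fun i hi him => ?_, fun i hi him => ?_⟩
  · have := hx.lt hi hij hjm
    have := hge hi (hij.le.trans hjm)
    show x i - 1 < x j - 1
    omega
  · have := mem_Icc.1 (hx.mem hi him)
    have := hge hi him
    simp only [mem_Icc]
    omega
  · have hcol := hx.color_eq hi him
    have := hge hi him
    rwa [prependColor_of_ne_one (by omega), prependColor_of_ne_one (by omega)] at hcol

lemma hasGoodPair_of_prependColor {n : ℕ} {y : ℕ → ℕ} (hm : 1 ≤ m)
    (hx : IsMonoMSet m (prependColor e Δ) (Icc 1 (n + 1)) x)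
    (hy : IsMonoMSet m (prependColor e Δ) (Icc 1 (n + 1)) y)
    (hxy : x m < y 1) (hgap : 2 * (x m - x 1) ≤ y m - x 1) (h2 : 2 ≤ x 1) :
    HasGoodPair m Δ (Icc 1 n) := by
  have := hx.le le_rfl hm le_rfl
  exact ⟨_, _, hx.sub_one h2, hy.sub_one (by omega), by omega, by omega⟩

lemma IsMonoMSet.sub_one_le_card_filter {S : Finset ℕ}
    (hx : IsMonoMSet m (prependColor e Δ) S x) (h1 : x 1 = 1) :
    m - 1 ≤ #{z ∈ Icc 1 (x m - 1) | Δ z = e} := by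
  calc m - 1 = #(Icc 2 m) := by simp
    _ ≤ _ := card_le_card_of_injOn (fun i => x i - 1) ?_ ?_
  · intro i hi
    simp only [coe_Icc, Set.mem_Icc] at hi
    have hlt := hx.lt le_rfl (by omega : 1 < i) hi.2
    have hle := hx.le (by omega) hi.2 le_rfl
    have hcol := hx.color_eq (by omega) hi.2
    rw [h1, prependColor_one, prependColor_of_ne_one (by omega)] at hcol
    simp only [coe_filter, mem_Icc, Set.mem_ofPred_eq, hcol, and_true]
    omega
  · refine StrictMonoOn.injOn fun i hi j hj hij => ?_
    simp only [coe_Icc, Set.mem_Icc] at hi hj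
    have := hx.lt (by omega) hij hj.2
    have := hx.lt le_rfl (by omega : 1 < i) hi.2
    omega

end prependColor

theorem stmt15 (m r : ℕ) (hm : 2 ≤ m) (hr : 1 ≤ r) (Δ : ℕ → ℕ)
    (hΔ : ∀ z ∈ Finset.Icc 1 (g m r - 1), Δ z ∈ Finset.Icc 1 r)
    (c : ℕ)
    (hc : m ≤ ((Finset.Icc 1 (r * (m - 1))).filter (fun z => Δ z = c)).card) :
    HasGoodPair m Δ (Finset.Icc 1 (g m r - 1)) := by
  obtain ⟨e, he, hlate⟩ := exists_color_mul_le_of_le_card_filter hr (m - 1) Δ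
  have hforce : ForcesGoodPair m r (g m r - 1 + 1) := by
    rw [Nat.sub_add_cancel (g_pos r hm)]
    exact forcesGoodPair_g r hm
  obtain ⟨x, y, hx, hy, hxy, hgap⟩ := hforce _ (prependColor_mem_Icc he hΔ)
  have hx1 := mem_Icc.1 (hx.mem le_rfl (by omega : 1 ≤ m))
  rcases (by omega : x 1 = 1 ∨ 2 ≤ x 1) with h1 | h2
  · have hR := hlate _ (hx.sub_one_le_card_filter h1)
    obtain ⟨t, ht⟩ := exists_isMonoMSet_of_le_card_filter hc
    have ht1 := mem_Icc.1 (ht.mem le_rfl (by omega : 1 ≤ m))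
    have htm := mem_Icc.1 (ht.mem (by omega) le_rfl)
    have hxm := mem_Icc.1 (hx.mem (by omega) le_rfl)
    have hy1 := (hx.le le_rfl (by omega : 1 ≤ m) le_rfl).trans_lt hxy
    refine ⟨t, _, ht.mono (Icc_subset_Icc_right (by omega)), hy.sub_one (by omega),
      show t m < y 1 - 1 by omega, show 2 * (t m - t 1) ≤ y m - 1 - t 1 by omega⟩
  · exact hasGoodPair_of_prependColor (by omega) hx hy hxy hgap h2
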